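/- The complex derivatives of the two Jacobi theta functions satisfy θ′((1+τ)/2) = i · exp(−πiτ/4) · θ̄′(0). -/

import Mathlib

/-!
Pairing the terms `n = m` and `n = -(m+1)` of `θ(z + (1+τ)/2)` turns them into the `m`-th sine term
of `θ̄`, which gives `θ̄(z) = -i exp(πiτ/4 + πiz) θ(z + (1+τ)/2)`. Since `θ` is even and
quasi-periodic, it vanishes at `(1+τ)/2`, so differentiating this identity at `z = 0` only the
derivative of `θ` survives.
-/

open Complex Matrix

noncomputable section

/-- The third Jacobi theta function `θ(z) = ∑_{m ∈ ℤ} exp(πiτm² + 2πimz)`. -/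
def theta3 (τ z : ℂ) : ℂ :=
  ∑' m : ℤ, Complex.exp (Real.pi * Complex.I * τ * (m : ℂ) ^ 2 +
    2 * Real.pi * Complex.I * (m : ℂ) * z)

/-- The first Jacobi theta function
`θ̄(z) = 2 exp(πiτ/4) ∑_{m ≥ 0} (−1)^m exp(πiτ m(m+1)) sin((2m+1)πz)`. -/
def theta1 (τ z : ℂ) : ℂ :=
  2 * Complex.exp (Real.pi * Complex.I * τ / 4) *
    ∑' m : ℕ, (-1 : ℂ) ^ m * Complex.exp (Real.pi * Complex.I * τ * (m : ℂ) * ((m : ℂ) + 1)) *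
      Complex.sin ((2 * (m : ℂ) + 1) * Real.pi * z)

/-- The Kronecker elliptic function `σ(u, z) = θ̄′(0) θ̄(u+z) / (θ̄(u) θ̄(z))`. -/
def sigmaK (τ u z : ℂ) : ℂ :=
  deriv (theta1 τ) 0 * theta1 τ (u + z) / (theta1 τ u * theta1 τ z)

open scoped Real

lemma theta3_eq_jacobiTheta₂ (τ : ℂ) : theta3 τ = (jacobiTheta₂ · τ) := by
  funext z
  refine tsum_congr fun n => ?_
  rw [jacobiTheta₂_term]
  ring_nf

lemma jacobiTheta₂_half_one_add_self (τ : ℂ) : jacobiTheta₂ ((1 + τ) / 2) τ = 0 := by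
  have h := jacobiTheta₂_add_left' ((1 - τ) / 2) τ
  rw [show (1 - τ) / 2 + τ = (1 + τ) / 2 by ring, show τ + 2 * ((1 - τ) / 2) = 1 by ring,
    show (1 - τ) / 2 = -((1 + τ) / 2) + 1 by ring, jacobiTheta₂_add_left, jacobiTheta₂_neg_left,
    mul_one, neg_mul, exp_neg, exp_pi_mul_I] at h
  linear_combination h / 2

lemma jacobiTheta₂_term_add_term_neg_succ (τ z : ℂ) (m : ℕ) :
    jacobiTheta₂_term m (z + (1 + τ) / 2) τ + jacobiTheta₂_term (-(m + 1)) (z + (1 + τ) / 2) τ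
      = 2 * I * cexp (-(π * I * z)) *
        ((-1) ^ m * cexp (π * I * τ * m * (m + 1)) * sin ((2 * m + 1) * π * z)) := by
  set c := (-1) ^ m * cexp (π * I * τ * m * (m + 1))
  have hc : c = cexp (m * (π * I) + π * I * τ * m * (m + 1)) := by
    rw [exp_add, exp_nat_mul, exp_pi_mul_I]
  have hterm : jacobiTheta₂_term m (z + (1 + τ) / 2) τ = c * cexp (2 * π * I * m * z) := by
    rw [hc, jacobiTheta₂_term, ← exp_add]
    congr 1
    push_cast
    ring
  have hterm_neg : jacobiTheta₂_term (-(m + 1)) (z + (1 + τ) / 2) τ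
      = -(c * cexp (-(2 * π * I * (m + 1) * z))) := by
    -- the two exponents differ by `-(2m+1)πi = -πi - m(2πi)`
    rw [hc, jacobiTheta₂_term, ← exp_add, ← exp_sub_pi_mul_I, ← exp_periodic.nat_mul m]
    congr 1
    push_cast
    ring
  have hexp : cexp (-(π * I * z)) * cexp ((2 * m + 1) * π * z * I) = cexp (2 * π * I * m * z) := by
    rw [← exp_add]; ring_nf
  have hexp_neg : cexp (-(π * I * z)) * cexp (-((2 * m + 1) * π * z) * I)
      = cexp (-(2 * π * I * (m + 1) * z)) := by
    rw [← exp_add]; ring_nf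
  rw [hterm, hterm_neg, sin, ← hexp, ← hexp_neg]
  ring_nf
  rw [I_sq]
  ring

lemma theta1_eq_jacobiTheta₂ {τ : ℂ} (hτ : 0 < τ.im) :
    theta1 τ = fun z =>
      -I * cexp (π * I * τ / 4 + π * I * z) * jacobiTheta₂ (z + (1 + τ) / 2) τ := by
  funext z
  have hsum : Summable (jacobiTheta₂_term · (z + (1 + τ) / 2) τ) :=
    (summable_jacobiTheta₂_term_iff _ τ).mpr hτ
  rw [theta1, jacobiTheta₂, ← tsum_nat_add_neg_add_one hsum,
    tsum_congr (jacobiTheta₂_term_add_term_neg_succ τ z), tsum_mul_left, exp_add]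
  have hz : cexp (π * I * z) * cexp (-(π * I * z)) = 1 := by rw [← exp_add]; simp
  set S := ∑' m : ℕ, (-1 : ℂ) ^ m * cexp (π * I * τ * m * (m + 1)) * sin ((2 * m + 1) * π * z)
  linear_combination
    (2 * cexp (π * I * τ / 4) * S * I ^ 2) * hz + 2 * cexp (π * I * τ / 4) * S * I_sq

lemma HasDerivAt.mul_of_eq_zero {𝕜 : Type*} [NontriviallyNormedField 𝕜] {f g : 𝕜 → 𝕜} {g' x : 𝕜}
    (hf : DifferentiableAt 𝕜 f x) (hg : HasDerivAt g g' x) (hgx : g x = 0) :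
    HasDerivAt (fun y => f y * g y) (f x * g') x :=
  (hf.hasDerivAt.mul hg).congr_deriv (by simp [hgx])

/-- Relation between the derivatives of the two Jacobi theta functions. -/
theorem stmt7 (τ : ℂ) (hτ : 0 < τ.im) :
    deriv (theta3 τ) ((1 + τ) / 2)
      = Complex.I * Complex.exp (-(Real.pi * Complex.I * τ) / 4) * deriv (theta1 τ) 0 := by
  have h3 : HasDerivAt (theta3 τ) (jacobiTheta₂' ((1 + τ) / 2) τ) ((1 + τ) / 2) :=
    theta3_eq_jacobiTheta₂ τ ▸ hasDerivAt_jacobiTheta₂_fst _ hτ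
  have hshift : HasDerivAt (fun z => jacobiTheta₂ (z + (1 + τ) / 2) τ)
      (jacobiTheta₂' ((1 + τ) / 2) τ) 0 := by
    simpa using (hasDerivAt_jacobiTheta₂_fst (0 + (1 + τ) / 2) hτ).comp_add_const 0 _
  have h1 : HasDerivAt (theta1 τ)
      (-I * cexp (π * I * τ / 4) * jacobiTheta₂' ((1 + τ) / 2) τ) 0 := by
    rw [theta1_eq_jacobiTheta₂ hτ]
    simpa using HasDerivAt.mul_of_eq_zero
      (f := fun z => -I * cexp (π * I * τ / 4 + π * I * z)) (by fun_prop) hshift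
      (by simpa using jacobiTheta₂_half_one_add_self τ)
  rw [h3.deriv, h1.deriv, neg_div, Complex.exp_neg]
  field_simp
  rw [I_sq]
  ring
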